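/- There exists a trace of the platform-confusion system with attestation reports containing events Emit(src, r), Report(dst, r), and Verify(dst, r), with src ≠ dst; i.e., a verifier accepts an attestation report attributing the attestation request r to platform dst although the guest issued r while it was executing on platform src. (This is the attack falsifying the paper's lemma AttestationReportStrongIntegrityAssocMA: strong integrity of attestation reports fails for migratable guests.) -/
import Mathlib


/-- The two distinct platforms of the platform-confusion scenario. -/
inductive Platform : Type
  | src
  | dst
deriving DecidableEq

/-- The other platform (target of a migration). -/
def Platform.other : Platform → Platform
  | .src => .dst
  | .dst => .src

/-- The phase of the guest: idle, or waiting for a firmware response. -/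
inductive Phase : Type
  | Idle
  | Waiting
deriving DecidableEq

/-- Logged events of the platform-confusion system with attestation reports:
`emit p r` (the guest, residing on platform `p`, issues the attestation request
`r`), `accept p r` (the firmware of platform `p` accepts request `r`),
`report p r` (the firmware of platform `p` signs an attestation report whose
chip identifier is `p` and whose report data is `r`), and `verify p r`
(a verifier accepts an attestation report attributing request `r` to
platform `p`). -/
inductive PCEvent (R : Type) : Type
  | emit (p : Platform) (r : R)
  | accept (p : Platform) (r : R)
  | report (p : Platform) (r : R)
  | verify (p : Platform) (r : R)

/-- The request identifier occurring in an event. -/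
def PCEvent.rid {R : Type} : PCEvent R → R
  | .emit _ r => r
  | .accept _ r => r
  | .report _ r => r
  | .verify _ r => r

/-- A configuration of the platform-confusion system: the platform on which the
guest context currently resides, the guest's message counter, the phase, and the
set of in-flight requests `(nonce, request identifier)`. -/
structure PCConf (R : Type) : Type where
  p : Platform
  c : ℕ
  ph : Phase
  net : Multiset (ℕ × R)

/-- `ReachPCA R cfg evs`: the platform-confusion system with attestation reports
reaches the configuration `cfg` from the initial configuration `(src, 0, Idle, ∅)`,
logging the events `evs` in order.  Upon each `accept` transition, the firmware
of the current platform `p` additionally logs `report p r`; at any later point a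
verifier may log `verify p r` provided `report p r` has previously been logged.
Request identifiers created by `emit` are fresh, hence pairwise distinct. -/
inductive ReachPCA (R : Type) : PCConf R → List (PCEvent R) → Prop
  | init : ReachPCA R ⟨Platform.src, 0, Phase.Idle, 0⟩ []
  | emit {p : Platform} {c : ℕ} {net : Multiset (ℕ × R)} {evs : List (PCEvent R)}
      (r : R) :
      ReachPCA R ⟨p, c, Phase.Idle, net⟩ evs →
      r ∉ evs.map PCEvent.rid →
      ReachPCA R ⟨p, c, Phase.Waiting, (c, r) ::ₘ net⟩ (evs ++ [PCEvent.emit p r])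
  | migrate {p : Platform} {c : ℕ} {ph : Phase} {net : Multiset (ℕ × R)}
      {evs : List (PCEvent R)} :
      ReachPCA R ⟨p, c, ph, net⟩ evs →
      ReachPCA R ⟨p.other, c, ph, net⟩ evs
  | accept {p : Platform} {c : ℕ} {rest : Multiset (ℕ × R)} {evs : List (PCEvent R)}
      (r : R) :
      ReachPCA R ⟨p, c, Phase.Waiting, (c, r) ::ₘ rest⟩ evs →
      ReachPCA R ⟨p, c + 2, Phase.Idle, rest⟩
        (evs ++ [PCEvent.accept p r, PCEvent.report p r])
  | verify {cfg : PCConf R} {evs : List (PCEvent R)} (p : Platform) (r : R) :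
      ReachPCA R cfg evs →
      PCEvent.report p r ∈ evs →
      ReachPCA R cfg (evs ++ [PCEvent.verify p r])

/-- The attack falsifying the paper's lemma AttestationReportStrongIntegrityAssocMA:
there exists a trace containing, in order, events `Emit(src, r)`, `Report(dst, r)`
and `Verify(dst, r)` with `src ≠ dst`; i.e., a verifier accepts an attestation
report attributing the attestation request `r` to platform `dst` although the
guest issued `r` while it was executing on platform `src`. -/
theorem attestation_report_strong_integrity_attack :
    ∃ (cfg : PCConf ℕ) (evs : List (PCEvent ℕ)) (r : ℕ),
      ReachPCA ℕ cfg evs ∧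
      List.Sublist [PCEvent.emit Platform.src r, PCEvent.report Platform.dst r,
        PCEvent.verify Platform.dst r] evs ∧
      Platform.src ≠ Platform.dst := by
  refine ⟨⟨Platform.dst, 2, Phase.Idle, 0⟩,
    [PCEvent.emit Platform.src 0, PCEvent.accept Platform.dst 0,
     PCEvent.report Platform.dst 0, PCEvent.verify Platform.dst 0], 0, ?_, ?_, by simp⟩
  · have h1 := ReachPCA.emit (R := ℕ) 0 ReachPCA.init (by simp)
    have h2 := ReachPCA.migrate h1
    have h3 := ReachPCA.accept (R := ℕ) 0 h2
    have h4 := ReachPCA.verify Platform.dst 0 h3 (by simp [Platform.other])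
    simpa [Platform.other] using h4
  · refine List.Sublist.cons₂ _ ?_
    exact List.Sublist.cons _ (List.Sublist.refl _)
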